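/- arXiv:0902.2774 — 2 statements merged into one kernel-verified Lean document; each statement's English description precedes it below -/
import Mathlib

section
/- For any two sets A, B ⊆ {0,1}^{2n}, the discrepancy of the rectangle A × B with respect to the inner-product-mod-2 matrix satisfies Disc(A × B) = 2^{-4n} · |∑_{x∈A} ∑_{y∈B} (-1)^{x⊙y}| ≤ 2^{-3n} · √(|A|·|B|). -/
/-- Binary inner product (number of positions where both strings have bit 1). -/
def ip (x y : List Bool) : ℕ := (List.zipWith (· && ·) x y).count true

/-- Discrepancy of a set of pairs of strings, w.r.t. the inner-product-mod-2 matrix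
at size parameter `n` (strings of length `2n`). -/
noncomputable def Disc (n : ℕ) (T : Finset (List Bool × List Bool)) : ℝ :=
  ((2:ℝ)^(4*n))⁻¹ * |∑ p ∈ T, (-1 : ℝ)^(ip p.1 p.2)|

/-!
Lindsey's lemma. The rows `x ↦ (-1)^(x⊙y)` of the inner-product matrix on `{0,1}^m` are
orthogonal, each of squared norm `2^m`. By Cauchy–Schwarz, `(∑_{x∈A} g x)^2 ≤ |A| ∑_{x∈A} (g x)^2`
for the row sums `g x = ∑_{y∈B} (-1)^(x⊙y)`; extending the right-hand sum to all `x` and expanding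
the square, orthogonality leaves `|A| |B| 2^m`. With `m = 2n` this gives
`|∑_{A×B} (-1)^(x⊙y)| ≤ 2^n √(|A| |B|)`.
-/

open Finset

theorem abs_sum_product_le_sqrt_of_orthogonal {α β : Type*} [DecidableEq β]
    (U A : Finset α) (B : Finset β) (hAU : A ⊆ U) (f : α → β → ℝ) (N : ℝ)
    (horth : ∀ y ∈ B, ∀ y' ∈ B, ∑ x ∈ U, f x y * f x y' = if y = y' then N else 0) :
    |∑ p ∈ A ×ˢ B, f p.1 p.2| ≤ √(N * (#A * #B)) := by
  set g : α → ℝ := fun x ↦ ∑ y ∈ B, f x y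
  have hsq_U : ∑ x ∈ U, g x ^ 2 = N * #B := by
    calc ∑ x ∈ U, g x ^ 2 = ∑ y ∈ B, ∑ y' ∈ B, ∑ x ∈ U, f x y * f x y' := by
          simp only [g, sq, sum_mul_sum]
          rw [sum_comm]
          exact sum_congr rfl fun y _ ↦ sum_comm
      _ = ∑ y ∈ B, N := sum_congr rfl fun y hy ↦ by
          rw [sum_congr rfl (horth y hy), sum_ite_eq, if_pos hy]
      _ = N * #B := by rw [sum_const, nsmul_eq_mul, mul_comm]
  have hsq : (∑ x ∈ A, g x) ^ 2 ≤ N * (#A * #B) :=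
    calc (∑ x ∈ A, g x) ^ 2 ≤ #A * ∑ x ∈ A, g x ^ 2 := sq_sum_le_card_mul_sum_sq
      _ ≤ #A * ∑ x ∈ U, g x ^ 2 := by gcongr
      _ = N * (#A * #B) := by rw [hsq_U]; ring
  rw [sum_product, ← Real.sqrt_sq_eq_abs]
  exact Real.sqrt_le_sqrt hsq

def bitStrings : ℕ → Finset (List Bool)
  | 0 => {[]}
  | m + 1 => (bitStrings m).image (List.cons false) ∪ (bitStrings m).image (List.cons true)

theorem mem_bitStrings_of_length : ∀ {m : ℕ} {x : List Bool}, x.length = m → x ∈ bitStrings m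
  | 0, x, h => by simp [bitStrings, List.length_eq_zero_iff.mp h]
  | m + 1, [], h => by simp at h
  | m + 1, b :: x, h => by
      have hx : x ∈ bitStrings m := mem_bitStrings_of_length (by simpa using h)
      cases b <;> simp [bitStrings, hx]

theorem sum_bitStrings_succ (m : ℕ) (f : List Bool → ℝ) :
    ∑ x ∈ bitStrings (m + 1), f x =
      ∑ x ∈ bitStrings m, f (false :: x) + ∑ x ∈ bitStrings m, f (true :: x) := by
  rw [bitStrings, sum_union, sum_image (by simp), sum_image (by simp)]
  simp [disjoint_left]

theorem neg_one_pow_ip_cons (b c : Bool) (x y : List Bool) :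
    (-1 : ℝ) ^ ip (b :: x) (c :: y) = (if b && c then -1 else 1) * (-1) ^ ip x y := by
  cases b <;> cases c <;> simp [ip, pow_succ, mul_comm]

theorem sum_bitStrings_neg_one_pow_ip_mul :
    ∀ {m : ℕ} {y y' : List Bool}, y.length = m → y'.length = m →
      ∑ x ∈ bitStrings m, (-1 : ℝ) ^ ip x y * (-1) ^ ip x y' = if y = y' then 2 ^ m else 0
  | 0, y, y', hy, hy' => by
      simp [List.length_eq_zero_iff.mp hy, List.length_eq_zero_iff.mp hy', bitStrings, ip]
  | m + 1, [], _, hy, _ => by simp at hy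
  | m + 1, _ :: _, [], _, hy' => by simp at hy'
  | m + 1, c :: y, c' :: y', hy, hy' => by
      have ih := sum_bitStrings_neg_one_pow_ip_mul (m := m) (y := y) (y' := y')
        (by simpa using hy) (by simpa using hy')
      simp only [sum_bitStrings_succ, neg_one_pow_ip_cons]
      -- the half over `true :: x` carries the sign `(-1)^(c + c')`: the halves cancel iff `c ≠ c'`
      cases c <;> cases c' <;> simp [ih] <;> split_ifs <;> ring

theorem stmt0 (n : ℕ) (A B : Finset (List Bool))
    (hA : ∀ x ∈ A, x.length = 2*n) (hB : ∀ y ∈ B, y.length = 2*n) :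
    Disc n (A ×ˢ B) ≤ ((2:ℝ)^(3*n))⁻¹ * Real.sqrt ((A.card : ℝ) * (B.card : ℝ)) := by
  have hsum := abs_sum_product_le_sqrt_of_orthogonal (bitStrings (2 * n)) A B
    (fun x hx ↦ mem_bitStrings_of_length (hA x hx)) (fun x y ↦ (-1 : ℝ) ^ ip x y) (2 ^ (2 * n))
    fun y hy y' hy' ↦ sum_bitStrings_neg_one_pow_ip_mul (hB y hy) (hB y' hy')
  rw [Real.sqrt_mul (by positivity), pow_mul', Real.sqrt_sq (by positivity)] at hsum
  calc Disc n (A ×ˢ B) ≤ ((2:ℝ) ^ (4 * n))⁻¹ * (2 ^ n * √(#A * #B)) := by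
        unfold Disc; gcongr
    _ = ((2:ℝ) ^ (3 * n))⁻¹ * √(#A * #B) := by
        rw [show 4 * n = 3 * n + n by ring, pow_add]
        field_simp
end

section
/- The generator G (defined by the case analysis in the context) is almost 1-1 on inputs of length 4n+1: the number of distinct output values on the 2^{4n+1} inputs of the form xybz (|x| = n, |y| = 2n, b ∈ {0,1}, |z| = n) is at least 2^{4n+1} − 2^{2n}; equivalently, G is at most two-to-one, and it is two-to-one only on pairs of inputs of the form {x 0^{2n} 1 z, x 0^{2n} 0 z}, which map to the common value x 1 0^{2n} 1 z. -/
def flipAt (l : List Bool) (i : ℕ) : List Bool := l.set i (! l.getD i false)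

def Gout (n : ℕ) (x y : List Bool) (b : Bool) (z : List Bool) : List Bool :=
  if ip (z ++ x) y % 2 = 1 then x ++ [!b] ++ y ++ [b] ++ z
  else if b = true then x ++ [true] ++ y ++ [true] ++ z
  else if y.all (fun c => !c) then x ++ [true] ++ y ++ [true] ++ z
  else if y.findIdx (fun c => c) + 1 ≤ n - 1 then
    x ++ [false] ++ y ++ [false] ++ flipAt z (y.findIdx (fun c => c))
  else
    flipAt x (y.findIdx (fun c => c) - n) ++ [false] ++ y ++ [false] ++ z

theorem flipAt_flipAt (l : List Bool) (i : ℕ) : flipAt (flipAt l i) i = l := by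
  rcases lt_or_ge i l.length with hi | hi
  · simp [flipAt, hi]
  · simp [flipAt, List.set_eq_of_length_le hi]

theorem List.all_not_iff_eq_replicate {y : List Bool} :
    y.all (fun c => !c) = true ↔ y = List.replicate y.length false := by
  simp [List.eq_replicate_iff]

theorem ip_eq_zero_of_all_not (w : List Bool) {y : List Bool} (hy : y.all (fun c => !c) = true) :
    ip w y = 0 := by
  rw [List.all_not_iff_eq_replicate] at hy
  rw [ip, hy]
  simp [List.count_eq_zero, List.mem_iff_getElem]

def decodeParts (n : ℕ) (x : List Bool) (c : Bool) (y : List Bool) (d : Bool) (z : List Bool) :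
    List Bool × List Bool × Bool × List Bool :=
  if (c || d) = true then (x, y, d, z)
  else if y.findIdx (fun c => c) + 1 ≤ n - 1 then (x, y, false, flipAt z (y.findIdx (fun c => c)))
  else (flipAt x (y.findIdx (fun c => c) - n), y, false, z)

def decode (n : ℕ) (u : List Bool) : List Bool × List Bool × Bool × List Bool :=
  decodeParts n (u.take n) (u.getD n false) ((u.drop (n + 1)).take (2 * n))
    (u.getD (3 * n + 1) false) (u.drop (3 * n + 2))

theorem decode_frame {n : ℕ} {x y : List Bool} (c d : Bool) (z : List Bool)
    (hx : x.length = n) (hy : y.length = 2 * n) :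
    decode n (x ++ [c] ++ y ++ [d] ++ z) = decodeParts n x c y d z := by
  have hxc : (x ++ [c]).length = n + 1 := by simp [hx]
  have hxcy : (x ++ [c] ++ y).length = 3 * n + 1 := by simp [hx, hy]; omega
  have hxcyd : (x ++ [c] ++ y ++ [d]).length = 3 * n + 2 := by simp [hx, hy]; omega
  simp only [decode]
  congr 1
  · simp [List.take_left' hx]
  · simp [hx]
  · rw [List.append_assoc _ y, List.append_assoc _ (y ++ _), List.drop_left' hxc,
      List.append_assoc, List.take_left' hy]
  · rw [List.append_assoc _ [d], List.getD_append_right _ _ _ _ hxcy.le, hxcy]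
    simp
  · exact List.drop_left' hxcyd

theorem decode_Gout {n : ℕ} {x y : List Bool} (b : Bool) (z : List Bool)
    (hx : x.length = n) (hy : y.length = 2 * n) :
    decode n (Gout n x y b z) = (x, y, b || y.all (fun c => !c), z) := by
  unfold Gout
  split_ifs with hodd hb hall hsmall
  · have hall : y.all (fun c => !c) = false := by
      by_contra h
      simp [ip_eq_zero_of_all_not _ (Bool.not_eq_false _ ▸ h)] at hodd
    rw [decode_frame _ _ _ hx hy]
    simp [decodeParts, hall]
  · rw [decode_frame _ _ _ hx hy]
    simp [decodeParts, hb]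
  · rw [decode_frame _ _ _ hx hy]
    simp [decodeParts, hall]
  · rw [decode_frame _ _ _ hx hy]
    simp [decodeParts, hb, hall, hsmall, flipAt_flipAt]
  · rw [decode_frame (x := flipAt x _) _ _ _ (List.length_set.trans hx) hy]
    simp [decodeParts, hb, hall, hsmall, flipAt_flipAt]

theorem Gout_of_all_not (n : ℕ) (x : List Bool) {y : List Bool} (b : Bool) (z : List Bool)
    (hy : y.all (fun c => !c) = true) : Gout n x y b z = x ++ [true] ++ y ++ [true] ++ z := by
  cases b <;> simp [Gout, ip_eq_zero_of_all_not _ hy, hy]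

theorem eq_of_Gout_eq {n : ℕ} {x y x' y' : List Bool} {b b' : Bool} {z z' : List Bool}
    (hx : x.length = n) (hy : y.length = 2 * n) (hx' : x'.length = n) (hy' : y'.length = 2 * n)
    (h : Gout n x y b z = Gout n x' y' b' z') :
    x = x' ∧ y = y' ∧ (b || y.all (fun c => !c)) = (b' || y'.all (fun c => !c)) ∧ z = z' := by
  simpa [decode_Gout b z hx hy, decode_Gout b' z' hx' hy'] using congrArg (decode n) h

def GoutTuple (n : ℕ) (p : List Bool × List Bool × Bool × List Bool) : List Bool :=
  Gout n p.1 p.2.1 p.2.2.1 p.2.2.2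

def inputs (n : ℕ) : Set (List Bool × List Bool × Bool × List Bool) :=
  {x | x.length = n} ×ˢ {y | y.length = 2 * n} ×ˢ Set.univ ×ˢ {z | z.length = n}

def collidingInputs (n : ℕ) : Set (List Bool × List Bool × Bool × List Bool) :=
  {x | x.length = n} ×ˢ {List.replicate (2 * n) false} ×ˢ {false} ×ˢ {z | z.length = n}

theorem collidingInputs_subset_inputs (n : ℕ) : collidingInputs n ⊆ inputs n := by
  rintro ⟨x, y, b, z⟩ ⟨hx, rfl, -, hz⟩
  exact ⟨hx, List.length_replicate, trivial, hz⟩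

theorem ncard_setOf_length_eq (α : Type*) [Fintype α] (n : ℕ) :
    {l : List α | l.length = n}.ncard = Fintype.card α ^ n := by
  rw [← Nat.card_coe_set_eq]
  exact (Nat.card_eq_fintype_card (α := List.Vector α n)).trans (card_vector n)

theorem ncard_inputs (n : ℕ) : (inputs n).ncard = 2 ^ (4 * n + 1) := by
  simp only [inputs, Set.ncard_prod, ncard_setOf_length_eq, Set.ncard_univ,
    Nat.card_eq_fintype_card, Fintype.card_bool]
  ring

theorem ncard_collidingInputs (n : ℕ) : (collidingInputs n).ncard = 2 ^ (2 * n) := by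
  simp only [collidingInputs, Set.ncard_prod, ncard_setOf_length_eq, Set.ncard_singleton,
    Fintype.card_bool]
  ring

theorem leftInvOn_decode_GoutTuple (n : ℕ) :
    Set.LeftInvOn (decode n) (GoutTuple n) (inputs n \ collidingInputs n) := by
  rintro ⟨x, y, b, z⟩ ⟨⟨hx, hy, -, hz⟩, hgood⟩
  rw [GoutTuple, decode_Gout b z hx hy]
  cases b
  · have hall : y.all (fun c => !c) = false := by
      by_contra hall
      rw [Bool.not_eq_false, List.all_not_iff_eq_replicate, hy] at hall
      exact hgood ⟨hx, hall, rfl, hz⟩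
    simp [hall]
  · simp

theorem le_ncard_image_GoutTuple (n : ℕ) :
    2 ^ (4 * n + 1) - 2 ^ (2 * n) ≤ (GoutTuple n '' inputs n).ncard := by
  have hfinite : (inputs n).Finite := Set.finite_of_ncard_pos (by rw [ncard_inputs]; positivity)
  calc 2 ^ (4 * n + 1) - 2 ^ (2 * n) = (inputs n \ collidingInputs n).ncard := by
        rw [Set.ncard_sdiff' (collidingInputs_subset_inputs n) hfinite, ncard_inputs,
          ncard_collidingInputs]
    _ = (GoutTuple n '' (inputs n \ collidingInputs n)).ncard :=
        (leftInvOn_decode_GoutTuple n).injOn.ncard_image.symm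
    _ ≤ (GoutTuple n '' inputs n).ncard :=
        Set.ncard_le_ncard (Set.image_mono Set.sdiff_subset) (hfinite.image _)

theorem stmt6_general (n : ℕ) :
    (2^(4*n+1) - 2^(2*n) ≤
      Set.ncard {u : List Bool | ∃ (x y : List Bool) (b : Bool) (z : List Bool),
        x.length = n ∧ y.length = 2*n ∧ z.length = n ∧ u = Gout n x y b z}) ∧
    (∀ (x y : List Bool) (b : Bool) (z x' y' : List Bool) (b' : Bool) (z' : List Bool),
      x.length = n → y.length = 2*n → z.length = n →
      x'.length = n → y'.length = 2*n → z'.length = n →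
      (x, y, b, z) ≠ (x', y', b', z') →
      Gout n x y b z = Gout n x' y' b' z' →
      x = x' ∧ z = z' ∧ y = List.replicate (2*n) false ∧
        y' = List.replicate (2*n) false ∧ b ≠ b' ∧
        Gout n x y b z = x ++ [true] ++ y ++ [true] ++ z) := by
  constructor
  · convert le_ncard_image_GoutTuple n using 2
    ext u
    constructor
    · rintro ⟨x, y, b, z, hx, hy, hz, rfl⟩
      exact ⟨(x, y, b, z), ⟨hx, hy, trivial, hz⟩, rfl⟩
    · rintro ⟨⟨x, y, b, z⟩, ⟨hx, hy, -, hz⟩, rfl⟩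
      exact ⟨x, y, b, z, hx, hy, hz, rfl⟩
  · intro x y b z x' y' b' z' hx hy _ hx' hy' _ hne heq
    obtain ⟨rfl, rfl, hb, rfl⟩ := eq_of_Gout_eq hx hy hx' hy' heq
    have hbb : b ≠ b' := fun h => hne (by rw [h])
    have hall : y.all (fun c => !c) = true := by
      by_contra hall
      exact hbb (by simpa [hall] using hb)
    have hzero : y = List.replicate (2 * n) false := hy ▸ List.all_not_iff_eq_replicate.mp hall
    exact ⟨rfl, rfl, hzero, hzero, hbb, Gout_of_all_not n x b z hall⟩

theorem stmt6 (n : ℕ) (hn : 1 ≤ n) :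
    (2^(4*n+1) - 2^(2*n) ≤
      Set.ncard {u : List Bool | ∃ (x y : List Bool) (b : Bool) (z : List Bool),
        x.length = n ∧ y.length = 2*n ∧ z.length = n ∧ u = Gout n x y b z}) ∧
    (∀ (x y : List Bool) (b : Bool) (z x' y' : List Bool) (b' : Bool) (z' : List Bool),
      x.length = n → y.length = 2*n → z.length = n →
      x'.length = n → y'.length = 2*n → z'.length = n →
      (x, y, b, z) ≠ (x', y', b', z') →
      Gout n x y b z = Gout n x' y' b' z' →
      x = x' ∧ z = z' ∧ y = List.replicate (2*n) false ∧
        y' = List.replicate (2*n) false ∧ b ≠ b' ∧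
        Gout n x y b z = x ++ [true] ++ y ++ [true] ++ z) :=
  stmt6_general n
end
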